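/- arXiv:1303.4099 — 2 statements merged into one kernel-verified Lean document; each statement's English description precedes it below -/
import Mathlib

section
/- Let (X, d) be a nonempty compact metric space and f : X → X a homeomorphism whose set of chain recurrent classes is finite. Then there exists a chain recurrent class R of f that is a repeller: there is an open set U with R ⊆ U, f⁻¹(closure(U)) ⊆ U, and ⋂_{n ≥ 0} f⁻ⁿ(U) = R. -/
/-- An `ε`-chain for `f` from `x` to `y`. -/
def EpsChain {X : Type*} [MetricSpace X] (f : X → X) (ε : ℝ) (x y : X) : Prop :=
  ∃ n : ℕ, 1 ≤ n ∧ ∃ c : ℕ → X, c 0 = x ∧ c n = y ∧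
    ∀ i < n, dist (f (c i)) (c (i + 1)) < ε

/-- A point is chain recurrent if for every `ε > 0` there is an `ε`-chain from the
point to itself. -/
def ChainRecurrentPt {X : Type*} [MetricSpace X] (f : X → X) (x : X) : Prop :=
  ∀ ε > 0, EpsChain f ε x x

/-- Two points are chain equivalent if for every `ε > 0` there are `ε`-chains from
each one to the other. -/
def ChainEquivPt {X : Type*} [MetricSpace X] (f : X → X) (x y : X) : Prop :=
  ∀ ε > 0, EpsChain f ε x y ∧ EpsChain f ε y x

/-- The chain recurrent class of a (chain recurrent) point `x`. -/
def ChainClass {X : Type*} [MetricSpace X] (f : X → X) (x : X) : Set X :=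
  {y | ChainRecurrentPt f y ∧ ChainEquivPt f x y}

/-- `x` chains to `y` at every scale. -/
def ChainLe {X : Type*} [MetricSpace X] (f : X → X) (x y : X) : Prop :=
  ∀ ε > 0, EpsChain f ε x y

section Aux

variable {X : Type*} [MetricSpace X] {f : X → X} {ε ε' : ℝ} {x y z : X}

lemma epsChain_single (h : dist (f x) y < ε) : EpsChain f ε x y := by
  refine ⟨1, le_refl 1, fun i => if i = 0 then x else y, by simp, by simp, ?_⟩
  intro i hi
  interval_cases i
  simpa using h

lemma EpsChain.mono (h : EpsChain f ε x y) (hε : ε ≤ ε') : EpsChain f ε' x y := by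
  obtain ⟨n, hn, c, h0, h1, hs⟩ := h
  exact ⟨n, hn, c, h0, h1, fun i hi => lt_of_lt_of_le (hs i hi) hε⟩

lemma EpsChain.trans (h1 : EpsChain f ε x y) (h2 : EpsChain f ε y z) :
    EpsChain f ε x z := by
  obtain ⟨n, hn, c, hc0, hcn, hcs⟩ := h1
  obtain ⟨m, hm, d, hd0, hdm, hds⟩ := h2
  refine ⟨n + m, by omega, fun i => if i ≤ n then c i else d (i - n), by simp [hc0], ?_, ?_⟩
  · have h : ¬ (n + m ≤ n) := by omega
    simp only [h, if_false]
    have e : n + m - n = m := by omega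
    rw [e, hdm]
  · intro i hi
    simp only []
    rcases lt_or_ge i n with h | h
    · have h1' : i ≤ n := by omega
      have h2' : i + 1 ≤ n := by omega
      simp only [h1', h2', if_true]
      exact hcs i h
    · have e1 : (if i ≤ n then c i else d (i - n)) = d (i - n) := by
        by_cases h' : i ≤ n
        · have hin : i = n := le_antisymm h' h
          subst hin
          rw [if_pos h', Nat.sub_self, hcn, hd0]
        · simp [h']
      have e2 : (if i + 1 ≤ n then c (i + 1) else d (i + 1 - n)) = d (i - n + 1) := by
        have h1' : ¬ (i + 1 ≤ n) := by omega
        have h2' : i + 1 - n = i - n + 1 := by omega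
        simp [h1', h2']
      rw [e1, e2]
      exact hds (i - n) (by omega)

lemma ChainLe.trans (h1 : ChainLe f x y) (h2 : ChainLe f y z) : ChainLe f x z :=
  fun ε hε => (h1 ε hε).trans (h2 ε hε)

lemma EpsChain.head_tail (h : EpsChain f ε x y) :
    ∃ w, dist (f x) w < ε ∧ (w = y ∨ EpsChain f ε w y) := by
  obtain ⟨n, hn, c, h0, h1, hs⟩ := h
  refine ⟨c 1, by rw [← h0]; exact hs 0 hn, ?_⟩
  rcases eq_or_lt_of_le hn with h' | h'
  · left; rw [← h'] at h1; exact h1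
  · refine Or.inr ⟨n - 1, by omega, fun i => c (i + 1), rfl, ?_, ?_⟩
    · have e : n - 1 + 1 = n := by omega
      simp only [e, h1]
    · intro i hi
      exact hs (i + 1) (by omega)

lemma EpsChain.init_last (h : EpsChain f ε x y) :
    ∃ w, dist (f w) y < ε ∧ (w = x ∨ EpsChain f ε x w) := by
  obtain ⟨n, hn, c, h0, h1, hs⟩ := h
  refine ⟨c (n - 1), ?_, ?_⟩
  · have e : n - 1 + 1 = n := by omega
    have := hs (n - 1) (by omega)
    rwa [e, h1] at this
  rcases eq_or_lt_of_le hn with h' | h'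
  · left
    have : n - 1 = 0 := by omega
    rw [this, h0]
  · right
    exact ⟨n - 1, by omega, c, h0, rfl, fun i hi => hs i (by omega)⟩

lemma EpsChain.replace_head {x' : X} (hc : EpsChain f ε x y) (hε : ε ≤ ε')
    (h : dist (f x') (f x) ≤ ε' - ε) : EpsChain f ε' x' y := by
  obtain ⟨w, hw, hrest⟩ := hc.head_tail
  have hxw : dist (f x') w < ε' := by
    calc dist (f x') w ≤ dist (f x') (f x) + dist (f x) w := dist_triangle _ _ _
    _ < (ε' - ε) + ε := add_lt_add_of_le_of_lt h hw
    _ = ε' := by ring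
  rcases hrest with rfl | hrest
  · exact epsChain_single hxw
  · exact (epsChain_single hxw).trans (hrest.mono hε)

lemma EpsChain.replace_last {y' : X} (hc : EpsChain f ε x y) (hε : ε ≤ ε')
    (h : dist y y' ≤ ε' - ε) : EpsChain f ε' x y' := by
  obtain ⟨w, hw, hrest⟩ := hc.init_last
  have hwy : dist (f w) y' < ε' := by
    calc dist (f w) y' ≤ dist (f w) y + dist y y' := dist_triangle _ _ _
    _ < ε + (ε' - ε) := add_lt_add_of_lt_of_le hw h
    _ = ε' := by ring
  rcases hrest with rfl | hrest
  · exact epsChain_single hwy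
  · exact (hrest.mono hε).trans (epsChain_single hwy)

lemma epsChain_orbit {n : ℕ} (hn : 1 ≤ n) (h : dist (f^[n] x) z < ε) :
    EpsChain f ε x z := by
  have hε : 0 < ε := lt_of_le_of_lt dist_nonneg h
  have h0n : ¬ (0 = n) := by omega
  refine ⟨n, hn, fun i => if i = n then z else f^[i] x, by simp [h0n], by simp, ?_⟩
  intro i hi
  have hi' : ¬ (i = n) := by omega
  simp only [hi', if_false]
  have e : f (f^[i] x) = f^[i + 1] x := (Function.iterate_succ_apply' f i x).symm
  by_cases h1 : i + 1 = n
  · simp only [h1, if_pos rfl]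
    rw [e, h1]
    exact h
  · simp only [h1, if_false]
    rw [e, dist_self]
    exact hε

lemma epsChain_backOrbit {y : ℕ → X} (hy : ∀ k, f (y (k + 1)) = y k) {m : ℕ}
    (hm : 1 ≤ m) {z : X} (h : dist (f z) (f (y m)) < ε) : EpsChain f ε z (y 0) := by
  have hε : 0 < ε := lt_of_le_of_lt dist_nonneg h
  have hm0 : ¬ (m = 0) := by omega
  refine ⟨m, hm, fun i => if i = 0 then z else y (m - i), by simp, by simp [hm0], ?_⟩
  intro i hi
  by_cases h0 : i = 0
  · subst h0
    have h1 : ¬ (1 = 0) := one_ne_zero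
    simp only [if_pos rfl, h1, if_false]
    have e : y (m - 1) = f (y m) := by
      have h2 := hy (m - 1)
      rw [(by omega : m - 1 + 1 = m)] at h2
      exact h2.symm
    rw [e]
    exact h
  · have h1 : ¬ (i + 1 = 0) := by omega
    simp only [h0, h1, if_false]
    have e : f (y (m - i)) = y (m - (i + 1)) := by
      have h2 := hy (m - (i + 1))
      rw [(by omega : m - (i + 1) + 1 = m - i)] at h2
      exact h2
    rw [e, dist_self]
    exact hε

lemma cr_of_omega
    (hu : ∀ ε > 0, ∃ δ > 0, ∀ a b : X, dist a b < δ → dist (f a) (f b) < ε)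
    {x z : X} (hz : ∀ η > 0, ∀ N : ℕ, ∃ m, N ≤ m ∧ dist z (f^[m] x) < η) :
    ChainRecurrentPt f z := by
  intro δ hδ
  obtain ⟨η, hη, hη'⟩ := hu (δ / 2) (by linarith)
  obtain ⟨m₁, -, hm₁⟩ := hz η hη 0
  obtain ⟨m₂, hm₂ge, hm₂⟩ := hz (δ / 2) (by linarith) (m₁ + 1)
  have horb : EpsChain f (δ / 2) (f^[m₁] x) z := by
    apply epsChain_orbit (n := m₂ - m₁) (by omega)
    rw [← Function.iterate_add_apply, (by omega : m₂ - m₁ + m₁ = m₂), dist_comm]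
    exact hm₂
  refine horb.replace_head (by linarith) ?_
  have h2 := hη' z (f^[m₁] x) hm₁
  linarith

lemma chainLe_image
    (hu : ∀ ε > 0, ∃ δ > 0, ∀ a b : X, dist a b < δ → dist (f a) (f b) < ε)
    {r : X} (hr : ChainRecurrentPt f r) : ChainLe f (f r) r := by
  intro δ hδ
  obtain ⟨η, hη, hη'⟩ := hu (δ / 2) (by linarith)
  set η' := min η (δ / 2) with hη'def
  have hη'pos : 0 < η' := lt_min hη (by linarith)
  have hη'le : η' ≤ δ / 2 := min_le_right _ _
  obtain ⟨w, hw, hrest⟩ := (hr η' hη'pos).head_tail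
  have hfw : dist (f (f r)) (f w) < δ / 2 :=
    hη' (f r) w (lt_of_lt_of_le hw (min_le_left _ _))
  rcases hrest with h_eq | hrest
  · rw [h_eq] at hw hfw
    refine epsChain_single ?_
    calc dist (f (f r)) r ≤ dist (f (f r)) (f r) + dist (f r) r := dist_triangle _ _ _
    _ < δ / 2 + δ / 2 := add_lt_add hfw (lt_of_lt_of_le hw hη'le)
    _ = δ := by ring
  · refine hrest.replace_head (by linarith) ?_
    linarith

end Aux

lemma aux_exists_min_rel {α : Type*} (r : α → α → Prop)
    (htr : ∀ a b c, r a b → r b c → r a c) (s : Finset α) :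
    (∀ a ∈ s, r a a) → s.Nonempty → ∃ a ∈ s, ∀ b ∈ s, r b a → r a b := by
  classical
  induction s using Finset.strongInduction with
  | _ s ih =>
    intro hrefl hne
    obtain ⟨a, ha⟩ := hne
    by_cases hgood : ∀ b ∈ s, r b a → r a b
    · exact ⟨a, ha, hgood⟩
    · push_neg at hgood
      obtain ⟨b, hb, hba, hab⟩ := hgood
      set t := s.filter (fun c => r c b) with ht
      have hts : t ⊂ s := by
        refine Finset.ssubset_iff_subset_ne.mpr ⟨Finset.filter_subset _ _, fun h => hab ?_⟩
        have hat : a ∈ t := by rw [h]; exact ha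
        exact (Finset.mem_filter.mp hat).2
      have hbt : b ∈ t := Finset.mem_filter.mpr ⟨hb, hrefl b hb⟩
      obtain ⟨c, hct, hcmin⟩ :=
        ih t hts (fun u hu => hrefl u (Finset.filter_subset _ _ hu)) ⟨b, hbt⟩
      have hcb : r c b := (Finset.mem_filter.mp hct).2
      refine ⟨c, Finset.filter_subset _ _ hct, fun d hd hdc => ?_⟩
      exact hcmin d (Finset.mem_filter.mpr ⟨hd, htr d c b hdc hcb⟩) hdc

/-- If a homeomorphism `f` of a nonempty compact metric space has only finitely many
chain recurrent classes, then some chain recurrent class `R` is a repeller: there is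
an open set `U ⊇ R` with `f⁻¹(closure U) ⊆ U` and `⋂ₙ f⁻ⁿ(U) = R`. -/
theorem exists_chainClass_repeller {X : Type*} [MetricSpace X] [CompactSpace X]
    [Nonempty X] (f : Equiv.Perm X) (hf : Continuous ⇑f) (hf' : Continuous ⇑f.symm)
    (hfin : {C : Set X | ∃ x, ChainRecurrentPt (⇑f) x ∧ C = ChainClass (⇑f) x}.Finite) :
    ∃ x, ChainRecurrentPt (⇑f) x ∧
      ∃ U : Set X, IsOpen U ∧ ChainClass (⇑f) x ⊆ U ∧
        (⇑f) ⁻¹' closure U ⊆ U ∧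
        (⋂ n : ℕ, (⇑f)^[n] ⁻¹' U) = ChainClass (⇑f) x := by
  classical
  obtain ⟨x₀⟩ := ‹Nonempty X›
  have hUC : UniformContinuous ⇑f := CompactSpace.uniformContinuous_of_continuous hf
  have hu : ∀ ε > 0, ∃ δ > 0, ∀ a b : X, dist a b < δ → dist (⇑f a) (⇑f b) < ε := by
    intro ε hε
    obtain ⟨δ, hδ, H⟩ := Metric.uniformContinuous_iff.mp hUC ε hε
    exact ⟨δ, hδ, fun a b h => H h⟩
  have hlimpt : ∀ u : ℕ → X, ∃ z : X, ∀ η > 0, ∀ N : ℕ, ∃ m, N ≤ m ∧ dist z (u m) < η := by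
    intro u
    obtain ⟨z, -, φ, hφ, hlim⟩ := isCompact_univ.tendsto_subseq (fun n => Set.mem_univ (u n))
    refine ⟨z, fun η hη N => ?_⟩
    rw [Metric.tendsto_atTop] at hlim
    obtain ⟨K, hK⟩ := hlim η hη
    refine ⟨φ (max K N), le_trans (le_max_right K N) (StrictMono.le_apply hφ), ?_⟩
    rw [dist_comm]
    exact hK (max K N) (le_max_left K N)
  -- Step 0 : chain recurrent points exist
  obtain ⟨z₀, hz₀⟩ := hlimpt (fun n => (⇑f)^[n] x₀)
  have hz₀cr : ChainRecurrentPt (⇑f) z₀ := cr_of_omega hu hz₀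
  -- Step 1 : representatives of the (finitely many) chain classes
  let rep : Set X → X := fun C =>
    if h : ∃ x, ChainRecurrentPt (⇑f) x ∧ C = ChainClass (⇑f) x then h.choose else x₀
  have hrep : ∀ C : Set X, (∃ x, ChainRecurrentPt (⇑f) x ∧ C = ChainClass (⇑f) x) →
      ChainRecurrentPt (⇑f) (rep C) ∧ C = ChainClass (⇑f) (rep C) := by
    intro C h
    simp only [rep, dif_pos h]
    exact h.choose_spec
  set s : Finset X := hfin.toFinset.image rep with hs
  have hsmem : ∀ b ∈ s, ChainRecurrentPt (⇑f) b := by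
    intro b hb
    rw [hs, Finset.mem_image] at hb
    obtain ⟨C, hC, rfl⟩ := hb
    exact (hrep C (hfin.mem_toFinset.mp hC)).1
  -- Step 2 : a minimal class representative `a`
  obtain ⟨a, has, hamin⟩ := aux_exists_min_rel (ChainLe (⇑f))
      (fun p q u h1 h2 => h1.trans h2) s (fun b hb ε hε => hsmem b hb ε hε)
      ⟨rep (ChainClass (⇑f) z₀), by
        rw [hs, Finset.mem_image]
        exact ⟨_, hfin.mem_toFinset.mpr ⟨z₀, hz₀cr, rfl⟩, rfl⟩⟩
  have hacr : ChainRecurrentPt (⇑f) a := hsmem a has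
  have hclassrep : ∀ y : X, ChainRecurrentPt (⇑f) y →
      ∃ b ∈ s, ChainEquivPt (⇑f) b y := by
    intro y hy
    have hmem : ∃ x, ChainRecurrentPt (⇑f) x ∧ ChainClass (⇑f) y = ChainClass (⇑f) x :=
      ⟨y, hy, rfl⟩
    obtain ⟨hbcr, hbclass⟩ := hrep _ hmem
    refine ⟨rep (ChainClass (⇑f) y), ?_, ?_⟩
    · rw [hs, Finset.mem_image]
      exact ⟨_, hfin.mem_toFinset.mpr hmem, rfl⟩
    · have hy_self : y ∈ ChainClass (⇑f) y := ⟨hy, fun ε hε => ⟨hy ε hε, hy ε hε⟩⟩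
      rw [hbclass] at hy_self
      exact hy_self.2
  -- Step 3 : minimality of the class of `a` among all chain recurrent points
  have hmin : ∀ y : X, ChainRecurrentPt (⇑f) y → ChainLe (⇑f) y a →
      ChainEquivPt (⇑f) a y := by
    intro y hy hya
    obtain ⟨b, hb, hby⟩ := hclassrep y hy
    have hba : ChainLe (⇑f) b a := ChainLe.trans (fun ε hε => (hby ε hε).1) hya
    have hab : ChainLe (⇑f) a b := hamin b hb hba
    intro ε hε
    exact ⟨(hab ε hε).trans (hby ε hε).1, hya ε hε⟩
  -- Step 4 : a uniform scale `ε₀`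
  let wit : X → ℝ := fun b =>
    if h : ∃ ε, 0 < ε ∧ ¬ EpsChain (⇑f) ε b a then h.choose else 1
  have hwit : ∀ b : X, ¬ ChainLe (⇑f) b a →
      0 < wit b ∧ ¬ EpsChain (⇑f) (wit b) b a := by
    intro b hb
    have h : ∃ ε, 0 < ε ∧ ¬ EpsChain (⇑f) ε b a := by
      by_contra hcon
      push_neg at hcon
      exact hb fun ε hε => hcon ε hε
    simp only [wit, dif_pos h]
    exact h.choose_spec
  set s' : Finset X := s.filter (fun b => ¬ ChainLe (⇑f) b a) with hs'
  set E : Finset ℝ := insert 1 (s'.image wit) with hE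
  have hEne : E.Nonempty := ⟨1, Finset.mem_insert_self _ _⟩
  set ε₀ : ℝ := E.min' hEne with hε₀
  have hε₀pos : 0 < ε₀ := by
    show 0 < E.min' hEne
    rw [Finset.lt_min'_iff]
    intro y hy
    rw [hE, Finset.mem_insert] at hy
    rcases hy with rfl | hy
    · norm_num
    · obtain ⟨b, hb, rfl⟩ := Finset.mem_image.mp hy
      exact (hwit b (Finset.mem_filter.mp hb).2).1
  have hε₀w : ∀ b ∈ s', ε₀ ≤ wit b := fun b hb =>
    Finset.min'_le _ _ (Finset.mem_insert_of_mem (Finset.mem_image_of_mem wit hb))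
  -- Step 5 : key property of `ε₀`
  have hkey : ∀ z : X, ChainRecurrentPt (⇑f) z → EpsChain (⇑f) ε₀ z a →
      ChainEquivPt (⇑f) a z := by
    intro z hz hza
    obtain ⟨b, hb, hbz⟩ := hclassrep z hz
    by_cases hba : ChainLe (⇑f) b a
    · have hzb : ChainLe (⇑f) z b := fun ε hε => (hbz ε hε).2
      exact hmin z hz (hzb.trans hba)
    · exfalso
      have hb' : b ∈ s' := Finset.mem_filter.mpr ⟨hb, hba⟩
      obtain ⟨hwpos, hwno⟩ := hwit b hba
      exact hwno ((((hbz ε₀ hε₀pos).1).trans hza).mono (hε₀w b hb'))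
  have hε₁pos : 0 < ε₀ / 2 := by linarith
  -- The trapping region
  refine ⟨a, hacr, {p : X | ∃ q ∈ ChainClass (⇑f) a, EpsChain (⇑f) (ε₀ / 2) p q},
    ?_, ?_, ?_, ?_⟩
  · -- open
    rw [Metric.isOpen_iff]
    intro p hp
    obtain ⟨q, hq, hchain⟩ := hp
    obtain ⟨w, hw, hrest⟩ := hchain.head_tail
    obtain ⟨δ, hδ, hδ'⟩ := hu (ε₀ / 2 - dist (⇑f p) w) (by linarith)
    refine ⟨δ, hδ, fun p' hp' => ?_⟩
    have h2 : dist (⇑f p') w < ε₀ / 2 := by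
      have h3 := hδ' p' p (Metric.mem_ball.mp hp')
      calc dist (⇑f p') w ≤ dist (⇑f p') (⇑f p) + dist (⇑f p) w := dist_triangle _ _ _
      _ < (ε₀ / 2 - dist (⇑f p) w) + dist (⇑f p) w := by linarith
      _ = ε₀ / 2 := by ring
    rcases hrest with h_eq | hrest
    · exact ⟨q, hq, by rw [← h_eq]; exact epsChain_single h2⟩
    · exact ⟨q, hq, (epsChain_single h2).trans hrest⟩
  · -- contains the class
    intro r hr
    exact ⟨r, hr, hr.1 (ε₀ / 2) hε₁pos⟩
  · -- pre-trapping
    intro p hp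
    obtain ⟨q', hq', hdq⟩ := Metric.mem_closure_iff.mp hp (ε₀ / 2) hε₁pos
    obtain ⟨q, hq, hchain⟩ := hq'
    exact ⟨q, hq, (epsChain_single hdq).trans hchain⟩
  · -- the intersection is exactly the class
    apply Set.Subset.antisymm
    · intro x hx
      have hxU : ∀ n : ℕ, ∃ q ∈ ChainClass (⇑f) a, EpsChain (⇑f) (ε₀ / 2) ((⇑f)^[n] x) q :=
        fun n => Set.mem_iInter.mp hx n
      -- ω-limit point
      obtain ⟨z, hz⟩ := hlimpt (fun n => (⇑f)^[n] x)
      have hzcr : ChainRecurrentPt (⇑f) z := cr_of_omega hu hz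
      obtain ⟨η, hηpos, hη⟩ := hu (ε₀ / 2) hε₁pos
      obtain ⟨N, -, hN⟩ := hz η hηpos 0
      obtain ⟨q, hq, hchain⟩ := hxU N
      have hzq : EpsChain (⇑f) ε₀ z q := by
        refine hchain.replace_head (by linarith) ?_
        have h3 := hη z ((⇑f)^[N] x) hN
        linarith
      have hza : EpsChain (⇑f) ε₀ z a := hzq.trans (hq.2 ε₀ hε₀pos).2
      have hAz : ChainEquivPt (⇑f) a z := hkey z hzcr hza
      -- α-limit point
      obtain ⟨z', hz'⟩ := hlimpt (fun n => (⇑f.symm)^[n] x)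
      have hy : ∀ k : ℕ, ⇑f ((⇑f.symm)^[k + 1] x) = (⇑f.symm)^[k] x := fun k => by
        rw [Function.iterate_succ_apply']
        exact f.apply_symm_apply _
      have hz'cr : ChainRecurrentPt (⇑f) z' := by
        intro δ hδ
        obtain ⟨η₂, hη₂, hη₂'⟩ := hu (δ / 2) (by linarith)
        obtain ⟨m₁, -, hm₁⟩ := hz' (δ / 2) (by linarith) 0
        obtain ⟨m₂, hm₂ge, hm₂⟩ := hz' η₂ hη₂ (m₁ + 1)
        have harg : dist (⇑f z') (⇑f ((fun k => (⇑f.symm)^[m₁ + k] x) (m₂ - m₁))) < δ / 2 := by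
          show dist (⇑f z') (⇑f ((⇑f.symm)^[m₁ + (m₂ - m₁)] x)) < δ / 2
          rw [(by omega : m₁ + (m₂ - m₁) = m₂)]
          exact hη₂' z' _ hm₂
        have hchain2 := epsChain_backOrbit (y := fun k => (⇑f.symm)^[m₁ + k] x)
          (fun k => hy (m₁ + k)) (by omega : 1 ≤ m₂ - m₁) harg
        refine EpsChain.replace_last hchain2 (by linarith) ?_
        show dist ((⇑f.symm)^[m₁ + 0] x) z' ≤ δ - δ / 2
        rw [Nat.add_zero, dist_comm]
        linarith
      have hz'x : ChainLe (⇑f) z' x := by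
        intro δ hδ
        obtain ⟨η₂, hη₂, hη₂'⟩ := hu δ hδ
        obtain ⟨m, hm, hdist⟩ := hz' η₂ hη₂ 1
        exact epsChain_backOrbit (y := fun k => (⇑f.symm)^[k] x) hy hm (hη₂' z' _ hdist)
      have hxz : ChainLe (⇑f) x z := by
        intro δ hδ
        obtain ⟨m, hm, hdist⟩ := hz δ hδ 1
        exact epsChain_orbit hm (by rw [dist_comm]; exact hdist)
      have hz'a : ChainLe (⇑f) z' a :=
        hz'x.trans (hxz.trans fun ε hε => (hAz ε hε).2)
      have hAz' : ChainEquivPt (⇑f) a z' := hmin z' hz'cr hz'a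
      have hax : ChainLe (⇑f) a x := ChainLe.trans (fun ε hε => (hAz' ε hε).1) hz'x
      have hxa : ChainLe (⇑f) x a := hxz.trans fun ε hε => (hAz ε hε).2
      exact ⟨fun ε hε => (hxa ε hε).trans (hax ε hε), fun ε hε => ⟨hax ε hε, hxa ε hε⟩⟩
    · intro r hr
      have hfwd : ∀ q, q ∈ ChainClass (⇑f) a → ⇑f q ∈ ChainClass (⇑f) a := by
        intro q hq
        have himg : ChainLe (⇑f) (⇑f q) q := chainLe_image hu hq.1
        have hq2 : ChainLe (⇑f) q (⇑f q) := fun ε hε =>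
          epsChain_single (by rw [dist_self]; exact hε)
        exact ⟨fun ε hε => (himg ε hε).trans (hq2 ε hε), fun ε hε =>
          ⟨((hq.2 ε hε).1).trans (hq2 ε hε), (himg ε hε).trans (hq.2 ε hε).2⟩⟩
      have hiter : ∀ n : ℕ, (⇑f)^[n] r ∈ ChainClass (⇑f) a := by
        intro n
        induction n with
        | zero => exact hr
        | succ k ih =>
          rw [Function.iterate_succ_apply']
          exact hfwd _ ih
      rw [Set.mem_iInter]
      intro n
      exact ⟨(⇑f)^[n] r, hiter n, (hiter n).1 (ε₀ / 2) hε₁pos⟩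
end

section
/- Let m ≥ 1 and let A be an invertible m × m real matrix. If for every nonzero z ∈ ℝᵐ the two-sided orbit {Aⁿ z : n ∈ ℤ} is unbounded (i.e. the set of norms ‖Aⁿ z‖, n ∈ ℤ, is not bounded above), then A is hyperbolic: every complex root λ of the characteristic polynomial of A satisfies |λ| ≠ 1. -/
open Matrix Polynomial

/-- eigenvector relation for all integer powers of a unit matrix -/
lemma zpow_mulVec_eig {m : ℕ} (U : GL (Fin m) ℂ) (lam : ℂ) (hlam : lam ≠ 0)
    (v : Fin m → ℂ) (hv : (U : Matrix (Fin m) (Fin m) ℂ).mulVec v = lam • v) :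
    ∀ n : ℤ, ((U ^ n : GL (Fin m) ℂ) : Matrix (Fin m) (Fin m) ℂ).mulVec v = lam ^ n • v := by
  have hinv : ((U⁻¹ : GL (Fin m) ℂ) : Matrix (Fin m) (Fin m) ℂ).mulVec v = lam⁻¹ • v := by
    have h1 : ((U⁻¹ : GL (Fin m) ℂ) : Matrix (Fin m) (Fin m) ℂ).mulVec
        ((U : Matrix (Fin m) (Fin m) ℂ).mulVec v) = v := by
      rw [Matrix.mulVec_mulVec]
      have : ((U⁻¹ : GL (Fin m) ℂ) : Matrix (Fin m) (Fin m) ℂ) *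
          (U : Matrix (Fin m) (Fin m) ℂ) = 1 := by
        rw [← Units.val_mul, inv_mul_cancel, Units.val_one]
      rw [this, Matrix.one_mulVec]
    rw [hv, Matrix.mulVec_smul] at h1
    have h2 := congrArg (fun w => lam⁻¹ • w) h1
    simpa [smul_smul, inv_mul_cancel₀ hlam] using h2
  intro n
  induction n using Int.induction_on with
  | zero => simp [Matrix.one_mulVec]
  | succ k ih =>
      rw [_root_.zpow_add_one, Units.val_mul, ← Matrix.mulVec_mulVec, hv, Matrix.mulVec_smul, ih,
        smul_smul, zpow_add_one₀ hlam, mul_comm]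
  | pred k ih =>
      rw [_root_.zpow_sub_one, Units.val_mul, ← Matrix.mulVec_mulVec, hinv, Matrix.mulVec_smul, ih,
        smul_smul, zpow_sub_one₀ hlam, mul_comm]


/-- If every nonzero vector has an unbounded two-sided orbit under an invertible
real `m × m` matrix `A` (`m ≥ 1`), then `A` is hyperbolic: no complex root of its
characteristic polynomial has absolute value `1`. -/
theorem unbounded_orbits_imp_hyperbolic {m : ℕ} (hm : 1 ≤ m)
    (A : GL (Fin m) ℝ)
    (hunb : ∀ z : Fin m → ℝ, z ≠ 0 →
      ¬ BddAbove (Set.range fun n : ℤ => ‖(((A ^ n : GL (Fin m) ℝ) :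
          Matrix (Fin m) (Fin m) ℝ)).mulVec z‖)) :
    ∀ lam : ℂ,
      ((Matrix.charpoly ((A : Matrix (Fin m) (Fin m) ℝ))).map
        (algebraMap ℝ ℂ)).IsRoot lam → ‖lam‖ ≠ 1 := by
  intro lam hroot habs
  have hlam : lam ≠ 0 := by
    intro h; rw [h] at habs; simp at habs
  set Ac : Matrix (Fin m) (Fin m) ℂ :=
    ((A : Matrix (Fin m) (Fin m) ℝ)).map (algebraMap ℝ ℂ) with hAc
  -- root of charpoly of Ac
  have hroot' : Ac.charpoly.IsRoot lam := by
    rwa [Matrix.charpoly_map]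
  -- det (lam • 1 - Ac) = 0
  have hdet : (lam • (1 : Matrix (Fin m) (Fin m) ℂ) - Ac).det = 0 := by
    have := hroot'
    rw [Polynomial.IsRoot, Matrix.charpoly, Polynomial.eval, ← Polynomial.coe_eval₂RingHom,
      RingHom.map_det] at this
    convert this using 2
    ext i j
    by_cases h : i = j <;>
      simp [h, Matrix.charmatrix_apply, Matrix.one_apply, Matrix.diagonal_apply, Matrix.sub_apply]
  obtain ⟨v, hv0, hv⟩ := (Matrix.exists_mulVec_eq_zero_iff).2 hdet
  have heig : Ac.mulVec v = lam • v := by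
    have := hv
    rw [Matrix.sub_mulVec, sub_eq_zero, Matrix.smul_mulVec, Matrix.one_mulVec] at this
    exact this.symm
  -- complexified unit
  set U : GL (Fin m) ℂ := Units.map (RingHom.mapMatrix (algebraMap ℝ ℂ)).toMonoidHom A with hU
  have hUval : (U : Matrix (Fin m) (Fin m) ℂ) = Ac := rfl
  have hUn : ∀ n : ℤ, ((U ^ n : GL (Fin m) ℂ) : Matrix (Fin m) (Fin m) ℂ)
      = (((A ^ n : GL (Fin m) ℝ) : Matrix (Fin m) (Fin m) ℝ)).map (algebraMap ℝ ℂ) := by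
    intro n
    rw [hU, ← map_zpow]
    rfl
  have hkey := zpow_mulVec_eig U lam hlam v (by rw [hUval]; exact heig)
  -- real and imaginary parts
  have hre : ∀ (n : ℤ) (i : Fin m),
      (((A ^ n : GL (Fin m) ℝ) : Matrix (Fin m) (Fin m) ℝ)).mulVec (fun j => (v j).re) i
        = ((lam ^ n • v) i).re ∧
      (((A ^ n : GL (Fin m) ℝ) : Matrix (Fin m) (Fin m) ℝ)).mulVec (fun j => (v j).im) i
        = ((lam ^ n • v) i).im := by
    intro n i
    have h1 : ((U ^ n : GL (Fin m) ℂ) : Matrix (Fin m) (Fin m) ℂ).mulVec v i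
        = (lam ^ n • v) i := by rw [hkey n]
    rw [hUn n] at h1
    set M := ((A ^ n : GL (Fin m) ℝ) : Matrix (Fin m) (Fin m) ℝ)
    have hsum : (M.map (algebraMap ℝ ℂ)).mulVec v i
        = ∑ j, (M i j : ℂ) * v j := by
      simp [Matrix.mulVec, dotProduct, Matrix.map_apply]
    constructor
    · rw [← h1, hsum, Complex.re_sum]
      simp [Matrix.mulVec, dotProduct]
    · rw [← h1, hsum, Complex.im_sum]
      simp [Matrix.mulVec, dotProduct]
  -- boundedness of orbits of re and im parts
  have habs' : ∀ n : ℤ, ‖lam ^ n‖ = 1 := by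
    intro n
    rw [norm_zpow, habs, _root_.one_zpow]
  have hbdd : ∀ (z : Fin m → ℝ), (∀ (n : ℤ) (i : Fin m),
      |(((A ^ n : GL (Fin m) ℝ) : Matrix (Fin m) (Fin m) ℝ)).mulVec z i|
        ≤ ‖(lam ^ n • v) i‖) →
      BddAbove (Set.range fun n : ℤ => ‖(((A ^ n : GL (Fin m) ℝ) :
          Matrix (Fin m) (Fin m) ℝ)).mulVec z‖) := by
    intro z hz
    refine ⟨‖v‖, ?_⟩
    rintro x ⟨n, rfl⟩
    rw [pi_norm_le_iff_of_nonneg (norm_nonneg v)]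
    intro i
    calc ‖(((A ^ n : GL (Fin m) ℝ) : Matrix (Fin m) (Fin m) ℝ)).mulVec z i‖
        ≤ ‖(lam ^ n • v) i‖ := hz n i
      _ = ‖v i‖ := by
          simp only [Pi.smul_apply, smul_eq_mul, norm_mul, habs' n, one_mul]
      _ ≤ ‖v‖ := norm_le_pi_norm v i
  -- pick nonzero real or imaginary part
  obtain ⟨i0, hi0⟩ : ∃ i, v i ≠ 0 := by
    by_contra h
    push_neg at h
    exact hv0 (funext h)
  by_cases hcase : (fun j => (v j).re) = (0 : Fin m → ℝ)
  · -- use imaginary part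
    have hzne : (fun j => (v j).im) ≠ (0 : Fin m → ℝ) := by
      intro h
      apply hi0
      have h1 : (v i0).re = 0 := congrFun hcase i0
      have h2 : (v i0).im = 0 := congrFun h i0
      exact Complex.ext h1 h2
    refine hunb _ hzne (hbdd _ ?_)
    intro n i
    rw [(hre n i).2]
    exact Complex.abs_im_le_norm _
  · refine hunb _ hcase (hbdd _ ?_)
    intro n i
    rw [(hre n i).1]
    exact Complex.abs_re_le_norm _
end
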